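/- (Technical counting lemma for permutations.) Let σ be a permutation of [n], let F = {i : σ(i) > i} with elements y_1 < y_2 < ⋯ < y_l, and let F′ = {i : σ⁻¹(i) < i}. Fix an index j with 1 ≤ j ≤ l such that y_j is a cycle valley of σ (i.e. σ(y_j) > y_j and σ⁻¹(y_j) > y_j). Then {u ∈ F′ : u > y_j and u ∉ {σ(y_{j+1}), …, σ(y_l)}} = {u : u > y_j and σ⁻¹(u) ≤ y_j}, and the cardinality of this set equals #{i ≤ y_j : σ(i) > y_j} (which is the height h_{y_j} of the associated Motzkin path after step y_j, equal to h_{y_j−1}+1). -/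
import Mathlib


open scoped Classical
open Finset

noncomputable section

namespace CFPaper

/-! ### Lattice-path machinery -/

inductive MStep | up | down | level
deriving DecidableEq

/-- all lists of Motzkin steps of length `n`. -/
def mlists : ℕ → Finset (List MStep)
  | 0 => {[]}
  | n + 1 =>
      (mlists n).image (MStep.up :: ·) ∪ (mlists n).image (MStep.down :: ·) ∪
        (mlists n).image (MStep.level :: ·)

/-- `MValid h p` : starting from height `h`, the path `p` stays at heights `≥ 0`
(automatic, heights being natural numbers) and ends at height `0`. -/
inductive MValid : ℕ → List MStep → Prop
  | nil : MValid 0 []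
  | up {h : ℕ} {p : List MStep} : MValid (h + 1) p → MValid h (MStep.up :: p)
  | down {h : ℕ} {p : List MStep} : MValid h p → MValid (h + 1) (MStep.down :: p)
  | level {h : ℕ} {p : List MStep} : MValid h p → MValid h (MStep.level :: p)

inductive DStep | up | down
deriving DecidableEq

/-- all lists of Dyck steps of length `n`. -/
def dlists : ℕ → Finset (List DStep)
  | 0 => {[]}
  | n + 1 => (dlists n).image (DStep.up :: ·) ∪ (dlists n).image (DStep.down :: ·)

inductive DValid : ℕ → List DStep → Prop
  | nil : DValid 0 []
  | up {h : ℕ} {p : List DStep} : DValid (h + 1) p → DValid h (DStep.up :: p)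
  | down {h : ℕ} {p : List DStep} : DValid h p → DValid (h + 1) (DStep.down :: p)

inductive SStep | up | down | lvl
deriving DecidableEq

/-- all lists of Schröder steps of total width `m` (a long level step `lvl` has width 2). -/
def slists : ℕ → Finset (List SStep)
  | 0 => {[]}
  | 1 => (slists 0).image (SStep.up :: ·) ∪ (slists 0).image (SStep.down :: ·)
  | m + 2 =>
      (slists (m + 1)).image (SStep.up :: ·) ∪ (slists (m + 1)).image (SStep.down :: ·) ∪
        (slists m).image (SStep.lvl :: ·)

inductive SValid : ℕ → List SStep → Prop
  | nil : SValid 0 []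
  | up {h : ℕ} {p : List SStep} : SValid (h + 1) p → SValid h (SStep.up :: p)
  | down {h : ℕ} {p : List SStep} : SValid h p → SValid (h + 1) (SStep.down :: p)
  | lvl {h : ℕ} {p : List SStep} : SValid h p → SValid h (SStep.lvl :: p)

variable {R : Type*} [CommRing R]

/-- weight of a Motzkin path, read off from the current height: each rise has weight 1,
each fall starting at height `h` has weight `β h`, each level step at height `h` has
weight `γ h`. -/
def mweight (β γ : ℕ → R) : ℕ → List MStep → R
  | _, [] => 1
  | h, MStep.up :: p => mweight β γ (h + 1) p
  | h, MStep.down :: p => β h * mweight β γ (h - 1) p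
  | h, MStep.level :: p => γ h * mweight β γ h p

/-- sum over all Motzkin paths of length `n` of the product of the step weights. -/
def motzkinSum (β γ : ℕ → R) (n : ℕ) : R :=
  ∑ p ∈ (mlists n).filter (MValid 0), mweight β γ 0 p

def dweight (α : ℕ → R) : ℕ → List DStep → R
  | _, [] => 1
  | h, DStep.up :: p => dweight α (h + 1) p
  | h, DStep.down :: p => α h * dweight α (h - 1) p

/-- sum over all Dyck paths of length `2*n` of the product over falls of `α h`,
`h` being the starting height of the fall (rises have weight 1). -/
def dyckSum (α : ℕ → R) (n : ℕ) : R :=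
  ∑ p ∈ (dlists (2 * n)).filter (DValid 0), dweight α 0 p

def sweight (α δ : ℕ → R) : ℕ → List SStep → R
  | _, [] => 1
  | h, SStep.up :: p => sweight α δ (h + 1) p
  | h, SStep.down :: p => α h * sweight α δ (h - 1) p
  | h, SStep.lvl :: p => δ h * sweight α δ h p

/-- sum over all Schröder paths of length `2*n` of the product of step weights:
rises have weight 1, a fall starting at height `h` has weight `α h`, a long level step
at height `h` has weight `δ h`. -/
def schroederSum (α δ : ℕ → R) (n : ℕ) : R :=
  ∑ p ∈ (slists (2 * n)).filter (SValid 0), sweight α δ 0 p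

/-- `(p,q)`-integer `[m]_{p,q} = Σ_{i=0}^{m-1} p^i q^(m-1-i)`. -/
def pqInt (p q : R) (m : ℕ) : R := ∑ i ∈ Finset.range m, p ^ i * q ^ (m - 1 - i)

/-! ### Permutation statistics -/

variable {n : ℕ}

/-- number of indices satisfying `P`. -/
def cnt (P : Fin n → Prop) : ℕ := (Finset.univ.filter P).card

def IsCpeak (σ : Equiv.Perm (Fin n)) (i : Fin n) : Prop := σ.symm i < i ∧ σ i < i
def IsCval (σ : Equiv.Perm (Fin n)) (i : Fin n) : Prop := i < σ.symm i ∧ i < σ i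
def IsCdrise (σ : Equiv.Perm (Fin n)) (i : Fin n) : Prop := σ.symm i < i ∧ i < σ i
def IsCdfall (σ : Equiv.Perm (Fin n)) (i : Fin n) : Prop := i < σ.symm i ∧ σ i < i
def IsFixPt (σ : Equiv.Perm (Fin n)) (i : Fin n) : Prop := σ i = i

def IsRec (σ : Equiv.Perm (Fin n)) (i : Fin n) : Prop := ∀ j, j < i → σ j < σ i
def IsArec (σ : Equiv.Perm (Fin n)) (i : Fin n) : Prop := ∀ j, i < j → σ i < σ j
def IsErec (σ : Equiv.Perm (Fin n)) (i : Fin n) : Prop := IsRec σ i ∧ ¬ IsArec σ i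
def IsEarec (σ : Equiv.Perm (Fin n)) (i : Fin n) : Prop := IsArec σ i ∧ ¬ IsRec σ i
def IsRar (σ : Equiv.Perm (Fin n)) (i : Fin n) : Prop := IsRec σ i ∧ IsArec σ i
def IsNrar (σ : Equiv.Perm (Fin n)) (i : Fin n) : Prop := ¬ IsRec σ i ∧ ¬ IsArec σ i

/-- `i` is a record value iff `σ⁻¹ i` is a record. -/
def IsRecV (σ : Equiv.Perm (Fin n)) (i : Fin n) : Prop := IsRec σ (σ.symm i)
def IsArecV (σ : Equiv.Perm (Fin n)) (i : Fin n) : Prop := IsArec σ (σ.symm i)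
def IsErecV (σ : Equiv.Perm (Fin n)) (i : Fin n) : Prop := IsRecV σ i ∧ ¬ IsArecV σ i
def IsEarecV (σ : Equiv.Perm (Fin n)) (i : Fin n) : Prop := IsArecV σ i ∧ ¬ IsRecV σ i
def IsNrarV (σ : Equiv.Perm (Fin n)) (i : Fin n) : Prop := ¬ IsRecV σ i ∧ ¬ IsArecV σ i

/-- the index `i : Fin n` represents the one-based index `i+1`; it is "even" if `i+1` is even. -/
def IsEvenIdx (i : Fin n) : Prop := Even ((i : ℕ) + 1)
def IsOddIdx (i : Fin n) : Prop := Odd ((i : ℕ) + 1)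

/-- `i` is the smallest element of its cycle. -/
def IsCycMin (σ : Equiv.Perm (Fin n)) (i : Fin n) : Prop := ∀ j, σ.SameCycle i j → i ≤ j

/-- number of cycles (counting fixed points as cycles), i.e. number of cycle minima. -/
def cyc (σ : Equiv.Perm (Fin n)) : ℕ := cnt (IsCycMin σ)

def eareccpeak (σ : Equiv.Perm (Fin n)) : ℕ := cnt fun i => IsEarec σ i ∧ IsCpeak σ i
def eareccdfall (σ : Equiv.Perm (Fin n)) : ℕ := cnt fun i => IsEarec σ i ∧ IsCdfall σ i
def ereccval (σ : Equiv.Perm (Fin n)) : ℕ := cnt fun i => IsErec σ i ∧ IsCval σ i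
def ereccdrise (σ : Equiv.Perm (Fin n)) : ℕ := cnt fun i => IsErec σ i ∧ IsCdrise σ i
def nrcpeak (σ : Equiv.Perm (Fin n)) : ℕ := cnt fun i => IsNrar σ i ∧ IsCpeak σ i
def nrcdfall (σ : Equiv.Perm (Fin n)) : ℕ := cnt fun i => IsNrar σ i ∧ IsCdfall σ i
def nrcval (σ : Equiv.Perm (Fin n)) : ℕ := cnt fun i => IsNrar σ i ∧ IsCval σ i
def nrcdrise (σ : Equiv.Perm (Fin n)) : ℕ := cnt fun i => IsNrar σ i ∧ IsCdrise σ i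
def cval (σ : Equiv.Perm (Fin n)) : ℕ := cnt (IsCval σ)

def ereccpeak' (σ : Equiv.Perm (Fin n)) : ℕ := cnt fun i => IsErecV σ i ∧ IsCpeak σ i
def eareccdfall' (σ : Equiv.Perm (Fin n)) : ℕ := cnt fun i => IsEarecV σ i ∧ IsCdfall σ i
def eareccval' (σ : Equiv.Perm (Fin n)) : ℕ := cnt fun i => IsEarecV σ i ∧ IsCval σ i
def ereccdrise' (σ : Equiv.Perm (Fin n)) : ℕ := cnt fun i => IsErecV σ i ∧ IsCdrise σ i
def nrcpeak' (σ : Equiv.Perm (Fin n)) : ℕ := cnt fun i => IsNrarV σ i ∧ IsCpeak σ i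
def nrcdfall' (σ : Equiv.Perm (Fin n)) : ℕ := cnt fun i => IsNrarV σ i ∧ IsCdfall σ i
def nrcval' (σ : Equiv.Perm (Fin n)) : ℕ := cnt fun i => IsNrarV σ i ∧ IsCval σ i
def nrcdrise' (σ : Equiv.Perm (Fin n)) : ℕ := cnt fun i => IsNrarV σ i ∧ IsCdrise σ i

def evennrfix (σ : Equiv.Perm (Fin n)) : ℕ :=
  cnt fun i => IsFixPt σ i ∧ IsEvenIdx i ∧ ¬ IsRar σ i
def oddnrfix (σ : Equiv.Perm (Fin n)) : ℕ :=
  cnt fun i => IsFixPt σ i ∧ IsOddIdx i ∧ ¬ IsRar σ i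
def evenrar (σ : Equiv.Perm (Fin n)) : ℕ :=
  cnt fun i => IsFixPt σ i ∧ IsEvenIdx i ∧ IsRar σ i
def oddrar (σ : Equiv.Perm (Fin n)) : ℕ :=
  cnt fun i => IsFixPt σ i ∧ IsOddIdx i ∧ IsRar σ i

/-- number of cycle valleys that are the minimum of their cycle. -/
def minval (σ : Equiv.Perm (Fin n)) : ℕ := cnt fun i => IsCval σ i ∧ IsCycMin σ i
/-- number of cycle valleys that are not the minimum of their cycle. -/
def nminval (σ : Equiv.Perm (Fin n)) : ℕ := cnt fun i => IsCval σ i ∧ ¬ IsCycMin σ i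

/-- pseudo-nesting number of the index `i`. -/
def psnest (σ : Equiv.Perm (Fin n)) (i : Fin n) : ℕ := cnt fun j => j < i ∧ i < σ j

def fixSet (σ : Equiv.Perm (Fin n)) : Finset (Fin n) := Finset.univ.filter (IsFixPt σ)

def psnestTot (σ : Equiv.Perm (Fin n)) : ℕ := ∑ i ∈ fixSet σ, psnest σ i
def epsnest (σ : Equiv.Perm (Fin n)) : ℕ :=
  ∑ i ∈ Finset.univ.filter (fun i => IsFixPt σ i ∧ IsEvenIdx i), psnest σ i
def opsnest (σ : Equiv.Perm (Fin n)) : ℕ :=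
  ∑ i ∈ Finset.univ.filter (fun i => IsFixPt σ i ∧ IsOddIdx i), psnest σ i

def ucross (σ : Equiv.Perm (Fin n)) (j : Fin n) : ℕ :=
  cnt fun i => i < j ∧ j < σ i ∧ σ i < σ j
def unest (σ : Equiv.Perm (Fin n)) (j : Fin n) : ℕ :=
  cnt fun i => i < j ∧ j < σ j ∧ σ j < σ i
def lcross (σ : Equiv.Perm (Fin n)) (k : Fin n) : ℕ :=
  cnt fun l => k < l ∧ σ k < σ l ∧ σ l < k
def lnest (σ : Equiv.Perm (Fin n)) (k : Fin n) : ℕ :=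
  cnt fun l => k < l ∧ σ l < σ k ∧ σ k < k

def ucross' (σ : Equiv.Perm (Fin n)) (k : Fin n) : ℕ :=
  cnt fun j => σ.symm k < j ∧ j < k ∧ k < σ j
def unest' (σ : Equiv.Perm (Fin n)) (k : Fin n) : ℕ :=
  cnt fun i => i < σ.symm k ∧ σ.symm k < k ∧ k < σ i
def lcross' (σ : Equiv.Perm (Fin n)) (j : Fin n) : ℕ :=
  cnt fun k => σ k < j ∧ j < k ∧ k < σ.symm j
def lnest' (σ : Equiv.Perm (Fin n)) (j : Fin n) : ℕ :=
  cnt fun l => σ l < j ∧ j < σ.symm j ∧ σ.symm j < l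

def ucrosscval (σ : Equiv.Perm (Fin n)) : ℕ := ∑ i ∈ Finset.univ.filter (IsCval σ), ucross σ i
def unestcval (σ : Equiv.Perm (Fin n)) : ℕ := ∑ i ∈ Finset.univ.filter (IsCval σ), unest σ i
def ucrosscdrise (σ : Equiv.Perm (Fin n)) : ℕ := ∑ i ∈ Finset.univ.filter (IsCdrise σ), ucross σ i
def unestcdrise (σ : Equiv.Perm (Fin n)) : ℕ := ∑ i ∈ Finset.univ.filter (IsCdrise σ), unest σ i
def lcrosscpeak (σ : Equiv.Perm (Fin n)) : ℕ := ∑ i ∈ Finset.univ.filter (IsCpeak σ), lcross σ i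
def lnestcpeak (σ : Equiv.Perm (Fin n)) : ℕ := ∑ i ∈ Finset.univ.filter (IsCpeak σ), lnest σ i
def lcrosscdfall (σ : Equiv.Perm (Fin n)) : ℕ := ∑ i ∈ Finset.univ.filter (IsCdfall σ), lcross σ i
def lnestcdfall (σ : Equiv.Perm (Fin n)) : ℕ := ∑ i ∈ Finset.univ.filter (IsCdfall σ), lnest σ i

def ucrosscpeak' (σ : Equiv.Perm (Fin n)) : ℕ := ∑ i ∈ Finset.univ.filter (IsCpeak σ), ucross' σ i
def unestcpeak' (σ : Equiv.Perm (Fin n)) : ℕ := ∑ i ∈ Finset.univ.filter (IsCpeak σ), unest' σ i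
def lcrosscval' (σ : Equiv.Perm (Fin n)) : ℕ := ∑ i ∈ Finset.univ.filter (IsCval σ), lcross' σ i
def lnestcval' (σ : Equiv.Perm (Fin n)) : ℕ := ∑ i ∈ Finset.univ.filter (IsCval σ), lnest' σ i
def lcrosscdfall' (σ : Equiv.Perm (Fin n)) : ℕ := ∑ i ∈ Finset.univ.filter (IsCdfall σ), lcross' σ i
def lnestcdfall' (σ : Equiv.Perm (Fin n)) : ℕ := ∑ i ∈ Finset.univ.filter (IsCdfall σ), lnest' σ i
def ucrosscdrise' (σ : Equiv.Perm (Fin n)) : ℕ := ∑ i ∈ Finset.univ.filter (IsCdrise σ), ucross' σ i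
def unestcdrise' (σ : Equiv.Perm (Fin n)) : ℕ := ∑ i ∈ Finset.univ.filter (IsCdrise σ), unest' σ i

/-- D-permutation: `2k-1 ≤ σ(2k-1)` and `2k ≥ σ(2k)` in one-based indexing. -/
def IsDPerm (σ : Equiv.Perm (Fin n)) : Prop :=
  ∀ i : Fin n, (IsOddIdx i → i ≤ σ i) ∧ (IsEvenIdx i → σ i ≤ i)

/-- D-o-semiderangement: a D-permutation with no odd fixed points. -/
def IsDoSemi (σ : Equiv.Perm (Fin n)) : Prop :=
  IsDPerm σ ∧ ∀ i, IsFixPt σ i → IsEvenIdx i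

def lema (σ : Equiv.Perm (Fin n)) : ℕ := cnt fun i => IsRec σ i ∧ IsEvenIdx (σ i)
def romi (σ : Equiv.Perm (Fin n)) : ℕ := cnt fun i => IsArec σ i ∧ IsOddIdx (σ i)
def remi (σ : Equiv.Perm (Fin n)) : ℕ := cnt fun i => IsArec σ i ∧ IsEvenIdx (σ i)
def fixCnt (σ : Equiv.Perm (Fin n)) : ℕ := cnt (IsFixPt σ)
def comi (σ : Equiv.Perm (Fin n)) : ℕ := cnt fun i => IsOddIdx i ∧ IsCycMin σ i
def cemi (σ : Equiv.Perm (Fin n)) : ℕ := cnt fun i => IsEvenIdx i ∧ IsCycMin σ i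

/-- the edge relation of the directed graph on `Fin n` with an edge `u → σ u`
for every `u ∈ S`. -/
def edgeOf (σ : Equiv.Perm (Fin n)) (S : Set (Fin n)) (u v : Fin n) : Prop :=
  u ∈ S ∧ v = σ u

/-- technical counting lemma for permutations: if `y` is a cycle
valley of `σ` then the elements of `F' = {u : σ⁻¹ u < u}` exceeding `y` that are not of
the form `σ v` with `v ∈ F = {v : v < σ v}`, `v > y`, are exactly the `u > y` with
`σ⁻¹ u ≤ y`; their number is `#{i ≤ y : σ i > y}`. -/
theorem statement16 (n : ℕ) (σ : Equiv.Perm (Fin n)) (y : Fin n)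
    (hy : y < σ.symm y ∧ y < σ y) :
    (Finset.univ.filter (fun u : Fin n =>
        σ.symm u < u ∧ y < u ∧ ∀ v, y < v → v < σ v → σ v ≠ u))
      = (Finset.univ.filter fun u : Fin n => y < u ∧ σ.symm u ≤ y) ∧
    (Finset.univ.filter fun u : Fin n => y < u ∧ σ.symm u ≤ y).card
      = (Finset.univ.filter fun i : Fin n => i ≤ y ∧ y < σ i).card := by
  constructor
  · ext u
    simp only [Finset.mem_filter, Finset.mem_univ, true_and]
    constructor
    · rintro ⟨h1, h2, h3⟩
      refine ⟨h2, ?_⟩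
      by_contra h
      push_neg at h
      exact h3 _ h (by rwa [Equiv.apply_symm_apply]) (σ.apply_symm_apply u)
    · rintro ⟨h2, h1⟩
      refine ⟨lt_of_le_of_lt h1 h2, h2, fun v hv _ hvu => ?_⟩
      have hv' : σ.symm u = v := by rw [← hvu, Equiv.symm_apply_apply]
      exact absurd (hv' ▸ h1) (not_le.mpr hv)
  · apply Finset.card_bij (fun u _ => σ.symm u)
    · intro u hu
      simp only [Finset.mem_filter, Finset.mem_univ, true_and] at hu ⊢
      exact ⟨hu.2, by rw [Equiv.apply_symm_apply]; exact hu.1⟩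
    · intro a _ b _ h
      exact σ.symm.injective h
    · intro i hi
      simp only [Finset.mem_filter, Finset.mem_univ, true_and] at hi
      exact ⟨σ i, by simp only [Finset.mem_filter, Finset.mem_univ, true_and,
        Equiv.symm_apply_apply]; exact ⟨hi.2, hi.1⟩, (Equiv.symm_apply_apply σ i).symm ▸ rfl⟩

end CFPaper

end
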